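/- Let (X,T) be a topological dynamical system, ε > 0, and let 𝓑 = {B_{n_i}(x_i, ε)}_{i∈I} be any family of open Bowen balls. Then there exists a countable subfamily 𝓑' = {B_{n_i}(x_i, ε)}_{i∈I'} of pairwise disjoint balls such that the union of all balls in 𝓑 is contained in ∪_{i∈I'} B_{n_i}(x_i, 3ε). -/
import Mathlib


open Filter Set MeasureTheory Topology
open scoped ENNReal NNReal

section DynDefs
variable {X : Type*} [MetricSpace X]

/-- The open Bowen ball of order `n` and radius `ε` centered at `x`. -/
def bowenBall (T : X → X) (n : ℕ) (x : X) (ε : ℝ) : Set X :=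
  {y | ∀ k < n, dist (T^[k] x) (T^[k] y) < ε}

/-- The closed Bowen ball of order `n` and radius `ε` centered at `x`. -/
def closedBowenBall (T : X → X) (n : ℕ) (x : X) (ε : ℝ) : Set X :=
  {y | ∀ k < n, dist (T^[k] x) (T^[k] y) ≤ ε}

/-- A gauge (dimension) function on `ℕ`: positive, antitone, tending to `0`. -/
def GaugeSeq (b : ℕ → ℝ) : Prop :=
  (∀ n, 0 < b n) ∧ Antitone b ∧ Tendsto b atTop (nhds 0)

/-- `M^b_{N,ε}(Z)`: infimum of `∑ b(n_i)` over countable covers of `Z` by Bowen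
balls of radius `ε` and orders `≥ N`. -/
noncomputable def bowenM (T : X → X) (b : ℕ → ℝ) (N : ℕ) (ε : ℝ) (Z : Set X) : ℝ≥0∞ :=
  sInf { r : ℝ≥0∞ | ∃ (x : ℕ → X) (n : ℕ → ℕ), (∀ i, N ≤ n i) ∧
      Z ⊆ ⋃ i, bowenBall T (n i) (x i) ε ∧ r = ∑' i, ENNReal.ofReal (b (n i)) }

/-- `M^b_ε(Z) = lim_{N → ∞} M^b_{N,ε}(Z) = sup_N M^b_{N,ε}(Z)`. -/
noncomputable def bowenMe (T : X → X) (b : ℕ → ℝ) (ε : ℝ) (Z : Set X) : ℝ≥0∞ :=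
  ⨆ N : ℕ, bowenM T b N ε Z

/-- `M^b(Z) = lim_{ε → 0} M^b_ε(Z) = sup_{ε > 0} M^b_ε(Z)`. -/
noncomputable def bowenMFull (T : X → X) (b : ℕ → ℝ) (Z : Set X) : ℝ≥0∞ :=
  ⨆ ε : {ε : ℝ // 0 < ε}, bowenMe T b ε.1 Z

/-- Bowen topological entropy of `Z` at scale `ε`: the critical exponent where
`M^s_ε(Z)` jumps from `∞` to `0`. -/
noncomputable def bowenEntropyE (T : X → X) (ε : ℝ) (Z : Set X) : ℝ≥0∞ :=
  ⨆ s : {s : ℝ≥0 // bowenMe T (fun n => Real.exp (-(s : ℝ) * (n : ℝ))) ε Z = ⊤}, (s.1 : ℝ≥0∞)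

/-- Bowen topological entropy of a subset `Z`. -/
noncomputable def bowenEntropy (T : X → X) (Z : Set X) : ℝ≥0∞ :=
  ⨆ ε : {ε : ℝ // 0 < ε}, bowenEntropyE T ε.1 Z

/-- `P^s_{N,ε}(Z)`: supremum of `∑ e^{-s n_i}` over countable pairwise disjoint
families of closed Bowen balls with centers in `Z` and orders `≥ N`. -/
noncomputable def packP (T : X → X) (s : ℝ) (N : ℕ) (ε : ℝ) (Z : Set X) : ℝ≥0∞ :=
  sSup { r : ℝ≥0∞ | ∃ (J : Set ℕ) (x : ℕ → X) (n : ℕ → ℕ),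
      (∀ i ∈ J, x i ∈ Z ∧ N ≤ n i) ∧
      (J.PairwiseDisjoint fun i => closedBowenBall T (n i) (x i) ε) ∧
      r = ∑' i : J, ENNReal.ofReal (Real.exp (-s * ((n i.1 : ℕ) : ℝ))) }

/-- `P^s_ε(Z) = lim_{N → ∞} P^s_{N,ε}(Z) = inf_N P^s_{N,ε}(Z)`. -/
noncomputable def packPe (T : X → X) (s : ℝ) (ε : ℝ) (Z : Set X) : ℝ≥0∞ :=
  ⨅ N : ℕ, packP T s N ε Z

/-- `𝒫^s_ε(Z)`: the packing pre-measure, infimum of `∑_i P^s_ε(Z_i)` over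
countable covers `{Z_i}` of `Z`. -/
noncomputable def packMeasE (T : X → X) (s : ℝ) (ε : ℝ) (Z : Set X) : ℝ≥0∞ :=
  ⨅ (Zi : ℕ → Set X) (_ : Z ⊆ ⋃ i, Zi i), ∑' i, packPe T s ε (Zi i)

/-- Packing topological entropy of `Z` at scale `ε`: the critical exponent where
`𝒫^s_ε(Z)` jumps from `∞` to `0`. -/
noncomputable def packEntropyE (T : X → X) (ε : ℝ) (Z : Set X) : ℝ≥0∞ :=
  ⨆ s : {s : ℝ≥0 // packMeasE T (s : ℝ) ε Z = ⊤}, (s.1 : ℝ≥0∞)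

/-- Packing topological entropy of a subset `Z`. -/
noncomputable def packEntropy (T : X → X) (Z : Set X) : ℝ≥0∞ :=
  ⨆ ε : {ε : ℝ // 0 < ε}, packEntropyE T ε.1 Z

/-- `-(1/n) log a`, valued in `ℝ≥0∞`, with the convention `log 0 = -∞`. -/
noncomputable def negLogDiv (a : ℝ≥0∞) (n : ℕ) : ℝ≥0∞ :=
  if a = 0 then ⊤ else ENNReal.ofReal (-(Real.log a.toReal) / (n : ℝ))

/-- Minimal cardinality of a finite `(n,ε)`-spanning set of `Z`. -/
noncomputable def spanCard (T : X → X) (n : ℕ) (ε : ℝ) (Z : Set X) : ℝ≥0∞ :=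
  ⨅ (E : Finset X) (_ : ∀ z ∈ Z, ∃ y ∈ E, ∀ k < n, dist (T^[k] z) (T^[k] y) ≤ ε),
    (E.card : ℝ≥0∞)

/-- Topological entropy of a subset `Z` defined via spanning sets. -/
noncomputable def htopSet (T : X → X) (Z : Set X) : ℝ≥0∞ :=
  ⨆ ε : {ε : ℝ // 0 < ε},
    Filter.limsup (fun n => ENNReal.ofReal (Real.log (spanCard T n ε.1 Z).toReal / (n : ℝ))) atTop

/-- `W^b_{N,ε}(Z)`: the weighted Bowen-ball covering quantity, infimum of
`∑ c_i b(n_i)` over weighted families with `∑ c_i χ_{B_{n_i}(x_i,ε)} ≥ χ_Z`. -/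
noncomputable def weightedW (T : X → X) (b : ℕ → ℝ) (N : ℕ) (ε : ℝ) (Z : Set X) : ℝ≥0∞ :=
  sInf { r : ℝ≥0∞ | ∃ (x : ℕ → X) (n : ℕ → ℕ) (c : ℕ → ℝ),
      (∀ i, 0 < c i) ∧ (∀ i, N ≤ n i) ∧
      (∀ z ∈ Z, (1 : ℝ≥0∞) ≤
        ∑' i, Set.indicator (bowenBall T (n i) (x i) ε) (fun _ => ENNReal.ofReal (c i)) z) ∧
      r = ∑' i, ENNReal.ofReal (c i) * ENNReal.ofReal (b (n i)) }

/-- `W^b(Z)`: double limit of `W^b_{N,ε}(Z)` as `N → ∞` and `ε → 0`. -/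
noncomputable def weightedWFull (T : X → X) (b : ℕ → ℝ) (Z : Set X) : ℝ≥0∞ :=
  ⨆ ε : {ε : ℝ // 0 < ε}, ⨆ N : ℕ, weightedW T b N ε Z

end DynDefs

section MeasDefs
variable {X : Type*} [MetricSpace X] [MeasurableSpace X]

/-- Local upper entropy of `μ` at `x` for radius `ε`. -/
noncomputable def upperLocalEntropyE (T : X → X) (μ : Measure X) (x : X) (ε : ℝ) : ℝ≥0∞ :=
  Filter.limsup (fun n => negLogDiv (μ (bowenBall T n x ε)) n) atTop

/-- Local lower entropy of `μ` at `x` for radius `ε`. -/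
noncomputable def lowerLocalEntropyE (T : X → X) (μ : Measure X) (x : X) (ε : ℝ) : ℝ≥0∞ :=
  Filter.liminf (fun n => negLogDiv (μ (bowenBall T n x ε)) n) atTop

/-- Local upper entropy `h̄_μ(T,x) = lim_{ε → 0} limsup_n -(1/n) log μ(B_n(x,ε))`. -/
noncomputable def upperLocalEntropy (T : X → X) (μ : Measure X) (x : X) : ℝ≥0∞ :=
  ⨆ ε : {ε : ℝ // 0 < ε}, upperLocalEntropyE T μ x ε.1

/-- Local lower entropy `h̲_μ(T,x) = lim_{ε → 0} liminf_n -(1/n) log μ(B_n(x,ε))`. -/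
noncomputable def lowerLocalEntropy (T : X → X) (μ : Measure X) (x : X) : ℝ≥0∞ :=
  ⨆ ε : {ε : ℝ // 0 < ε}, lowerLocalEntropyE T μ x ε.1

/-- Measure-theoretical upper entropy `h̄_μ(T) = ∫ h̄_μ(T,x) dμ`. -/
noncomputable def upperEntropy (T : X → X) (μ : Measure X) : ℝ≥0∞ :=
  ∫⁻ x, upperLocalEntropy T μ x ∂μ

/-- Measure-theoretical lower entropy `h̲_μ(T) = ∫ h̲_μ(T,x) dμ`. -/
noncomputable def lowerEntropy (T : X → X) (μ : Measure X) : ℝ≥0∞ :=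
  ∫⁻ x, lowerLocalEntropy T μ x ∂μ

end MeasDefs

section AuxVitali
variable {X : Type*} [MetricSpace X]

lemma mem_bowenBall_self (T : X → X) (n : ℕ) (x : X) {ε : ℝ} (hε : 0 < ε) :
    x ∈ bowenBall T n x ε := fun k _ => by simp [hε]

lemma isOpen_bowenBall (T : X → X) (hT : Continuous T) (n : ℕ) (x : X) (ε : ℝ) :
    IsOpen (bowenBall T n x ε) := by
  have : bowenBall T n x ε = ⋂ k ∈ Finset.range n, (T^[k]) ⁻¹' (Metric.ball (T^[k] x) ε) := by
    ext y
    simp [bowenBall, Metric.mem_ball, dist_comm]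
  rw [this]
  exact isOpen_biInter_finset fun k _ =>
    ((Metric.isOpen_ball).preimage (hT.iterate k))

lemma bowenBall_subset_enlarge {T : X → X} {m nn : ℕ} {x y z : X} {ε : ℝ}
    (hmn : m ≤ nn) (hz1 : z ∈ bowenBall T nn x ε) (hz2 : z ∈ bowenBall T m y ε) :
    bowenBall T nn x ε ⊆ bowenBall T m y (3 * ε) := by
  intro w hw k hk
  have hkn : k < nn := lt_of_lt_of_le hk hmn
  calc dist (T^[k] y) (T^[k] w)
      ≤ dist (T^[k] y) (T^[k] z) + dist (T^[k] z) (T^[k] x) + dist (T^[k] x) (T^[k] w) :=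
        dist_triangle4 _ _ _ _
    _ < ε + ε + ε := by
        have h1 := hz2 k hk
        have h2 := hz1 k hkn
        have h3 := hw k hkn
        rw [dist_comm (T^[k] z) (T^[k] x)]
        linarith
    _ = 3 * ε := by ring

end AuxVitali

/-- Dynamical Vitali covering lemma: any family of open Bowen balls of radius `ε`
admits a countable pairwise disjoint subfamily whose `3ε`-enlargements cover the
union of the whole family. -/
theorem stmt8 {X : Type*} [MetricSpace X] [CompactSpace X]
    (T : X → X) (hT : Continuous T)
    (ε : ℝ) (hε : 0 < ε) {I : Type*} (x : I → X) (n : I → ℕ) :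
    ∃ I' : Set I, I'.Countable ∧
      (I'.PairwiseDisjoint fun i => bowenBall T (n i) (x i) ε) ∧
      (⋃ i, bowenBall T (n i) (x i) ε) ⊆ ⋃ i ∈ I', bowenBall T (n i) (x i) (3 * ε) := by
  set B : I → Set X := fun i => bowenBall T (n i) (x i) ε with hB
  -- the family of "good" sets
  set G : Set (Set I) := {A | A.PairwiseDisjoint B ∧
    ∀ i ∈ A, ∀ j : I, n j < n i → ∃ i' ∈ A, n i' ≤ n j ∧ ¬ Disjoint (B i') (B j)} with hG
  have hzorn : ∃ A, Maximal (· ∈ G) A := by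
    apply zorn_subset
    intro c hcG hchain
    refine ⟨⋃₀ c, ⟨?_, ?_⟩, fun s hs => subset_sUnion_of_mem hs⟩
    · intro i hi j hj hij
      obtain ⟨s, hs, his⟩ := hi
      obtain ⟨t, ht, hjt⟩ := hj
      rcases hchain.total hs ht with h | h
      · exact (hcG ht).1 (h his) hjt hij
      · exact (hcG hs).1 his (h hjt) hij
    · rintro i ⟨s, hs, his⟩ j hji
      obtain ⟨i', hi', h⟩ := (hcG hs).2 i his j hji
      exact ⟨i', ⟨s, hs, hi'⟩, h⟩
  obtain ⟨A, hAG, hAmax⟩ := hzorn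
  -- key claim: every ball meets a chosen ball of smaller or equal order
  have key : ∀ j : I, ∃ i ∈ A, n i ≤ n j ∧ ¬ Disjoint (B i) (B j) := by
    by_contra hcon
    push_neg at hcon
    obtain ⟨j, hj⟩ := hcon
    -- pick a counterexample of minimal order
    have hne : {m : ℕ | ∃ j : I, n j = m ∧ ∀ i ∈ A, n i ≤ n j → Disjoint (B i) (B j)}.Nonempty :=
      ⟨n j, j, rfl, fun i hi hle => hj i hi hle⟩
    obtain ⟨j₀, hj₀eq, hj₀⟩ := Nat.sInf_mem hne
    have hmin : ∀ j' : I, n j' < n j₀ → ∃ i ∈ A, n i ≤ n j' ∧ ¬ Disjoint (B i) (B j') := by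
      intro j' hlt
      by_contra hcon'
      push_neg at hcon'
      have : n j' ∈ {m : ℕ | ∃ j : I, n j = m ∧ ∀ i ∈ A, n i ≤ n j → Disjoint (B i) (B j)} :=
        ⟨j', rfl, hcon'⟩
      have h1 := Nat.sInf_le this
      omega
    -- j₀ ∉ A
    have hj₀A : j₀ ∉ A := by
      intro hmem
      have := hj₀ j₀ hmem le_rfl
      exact (Set.not_disjoint_iff.2 ⟨x j₀, mem_bowenBall_self T _ _ hε,
        mem_bowenBall_self T _ _ hε⟩) this
    -- no element of A has order > n j₀
    have hord : ∀ i ∈ A, n i ≤ n j₀ := by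
      intro i hi
      by_contra hgt
      push_neg at hgt
      obtain ⟨i', hi', hle, hnd⟩ := hAG.2 i hi j₀ hgt
      exact hnd (hj₀ i' hi' hle)
    -- A ∪ {j₀} ∈ G, contradicting maximality
    have hnew : insert j₀ A ∈ G := by
      constructor
      · intro a ha b hb hab
        rcases ha with rfl | ha
        · rcases hb with rfl | hb
          · exact absurd rfl hab
          · exact (hj₀ b hb (hord b hb)).symm
        · rcases hb with rfl | hb
          · exact hj₀ a ha (hord a ha)
          · exact hAG.1 ha hb hab
      · intro i hi j' hji
        rcases hi with rfl | hi
        · obtain ⟨i', hi', h1, h2⟩ := hmin j' hji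
          exact ⟨i', Or.inr hi', h1, h2⟩
        · obtain ⟨i', hi', h⟩ := hAG.2 i hi j' hji
          exact ⟨i', Or.inr hi', h⟩
    exact hj₀A (hAmax hnew (subset_insert _ _) (mem_insert _ _))
  refine ⟨A, ?_, hAG.1, ?_⟩
  · exact hAG.1.countable_of_isOpen (fun i _ => isOpen_bowenBall T hT _ _ _)
      (fun i _ => ⟨x i, mem_bowenBall_self T _ _ hε⟩)
  · intro z hz
    obtain ⟨j, hj⟩ := mem_iUnion.1 hz
    obtain ⟨i, hiA, hle, hnd⟩ := key j
    obtain ⟨w, hw1, hw2⟩ := Set.not_disjoint_iff.1 hnd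
    exact mem_biUnion hiA (bowenBall_subset_enlarge hle hw2 hw1 hj)
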